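/- arXiv:1301.6874 — 6 statements merged into one kernel-verified Lean document; each statement's English description precedes it below -/
import Mathlib

section
/- For the Cesàro matrix C of order α with 0 < α ≤ 1, setting φ_n = 1/A_n^α = c_{nn}, one has Σ_{v=0}^n |c_{vv} ĉ_{n,v+1}| = O(φ_n) as n → ∞. -/
/-!
Since `c_{vv} = 1/A_v^α`, the sum is `(n A_n^α)⁻¹ ∑_{v<n} ((v+1)/A_v^α) A_{n-1-v}^{α-1}`.
For `α ≤ 1` the weight `(v+1)/A_v^α` is nondecreasing, because
`A_{v+1}^α / A_v^α = (v+1+α)/(v+1) ≤ (v+2)/(v+1)`; so it is at most `n/A_{n-1}^α`, and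
`∑_{k<n} A_k^{α-1} = A_{n-1}^α` turns the bound into `1/A_n^α`: the constant `C = 1` works.
-/

/-- The Cesàro number `A_n^α = Γ(n+α+1)/(Γ(α+1)Γ(n+1))`. -/
noncomputable def cesaroNum (α : ℝ) (n : ℕ) : ℝ :=
  Real.Gamma (n + α + 1) / (Real.Gamma (α + 1) * Real.Gamma (n + 1))

section CesaroNum

variable {β : ℝ}

lemma cesaroNum_pos (hβ : -1 < β) (n : ℕ) : 0 < cesaroNum β n := by
  unfold cesaroNum
  have : (0 : ℝ) ≤ n := n.cast_nonneg
  exact div_pos (Real.Gamma_pos_of_pos (by linarith))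
    (mul_pos (Real.Gamma_pos_of_pos (by linarith)) (Real.Gamma_pos_of_pos (by linarith)))

lemma cesaroNum_zero (hβ : -1 < β) : cesaroNum β 0 = 1 := by
  have : Real.Gamma (β + 1) ≠ 0 := (Real.Gamma_pos_of_pos (by linarith)).ne'
  simp [cesaroNum, this]

lemma cesaroNum_succ (hβ : -1 < β) (n : ℕ) :
    ((n : ℝ) + 1) * cesaroNum β (n + 1) = (n + 1 + β) * cesaroNum β n := by
  have : (0 : ℝ) ≤ n := n.cast_nonneg
  unfold cesaroNum
  push_cast
  rw [show (n : ℝ) + 1 + β + 1 = (n + β + 1) + 1 by ring,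
    Real.Gamma_add_one (s := n + β + 1) (by linarith),
    Real.Gamma_add_one (s := n + 1) (by positivity)]
  field_simp
  ring

lemma cesaroNum_order_succ (hβ : -1 < β) (n : ℕ) :
    (β + 1) * cesaroNum (β + 1) n = (n + β + 1) * cesaroNum β n := by
  have : (0 : ℝ) ≤ n := n.cast_nonneg
  unfold cesaroNum
  rw [show (n : ℝ) + (β + 1) + 1 = (n + β + 1) + 1 by ring,
    Real.Gamma_add_one (s := n + β + 1) (by linarith),
    Real.Gamma_add_one (s := β + 1) (by linarith)]
  have : β + 1 ≠ 0 := by linarith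
  field_simp

lemma cesaroNum_order_succ_succ (hβ : -1 < β) (n : ℕ) :
    cesaroNum (β + 1) (n + 1) = cesaroNum (β + 1) n + cesaroNum β (n + 1) := by
  have h₁ := cesaroNum_succ (show -1 < β + 1 by linarith) n
  have h₂ := cesaroNum_order_succ hβ (n + 1)
  push_cast at h₂
  have : (0 : ℝ) ≤ n := n.cast_nonneg
  refine mul_left_cancel₀ (show (n : ℝ) + 1 + (β + 1) ≠ 0 by linarith) ?_
  linear_combination h₁ + h₂

lemma sum_range_cesaroNum (hβ : -1 < β) (n : ℕ) :
    ∑ k ∈ Finset.range (n + 1), cesaroNum β k = cesaroNum (β + 1) n := by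
  induction n with
  | zero => simp [cesaroNum_zero hβ, cesaroNum_zero (show -1 < β + 1 by linarith)]
  | succ n ih => rw [Finset.sum_range_succ, ih, cesaroNum_order_succ_succ hβ]

lemma monotone_succ_div_cesaroNum (hβ₀ : -1 < β) (hβ₁ : β ≤ 1) :
    Monotone fun n : ℕ ↦ ((n : ℝ) + 1) / cesaroNum β n := by
  refine monotone_nat_of_le_succ fun n ↦ ?_
  have hA := cesaroNum_pos hβ₀ n
  have hA' := cesaroNum_pos hβ₀ (n + 1)
  have h := cesaroNum_succ hβ₀ n
  push_cast
  rw [div_le_div_iff₀ hA hA']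
  nlinarith

end CesaroNum

lemma sum_succ_div_cesaroNum_mul_le {α : ℝ} (hα₀ : 0 < α) (hα₁ : α ≤ 1) (n : ℕ) :
    ∑ v ∈ Finset.range (n + 1), ((v : ℝ) + 1) / cesaroNum α v * cesaroNum (α - 1) (n - v)
      ≤ n + 1 := by
  have hβ : (-1 : ℝ) < α - 1 := by linarith
  have hA := cesaroNum_pos (show (-1 : ℝ) < α by linarith) n
  calc _
      ≤ ∑ v ∈ Finset.range (n + 1),
          ((n : ℝ) + 1) / cesaroNum α n * cesaroNum (α - 1) (n - v) := by
        refine Finset.sum_le_sum fun v hv ↦ mul_le_mul_of_nonneg_right ?_ (cesaroNum_pos hβ _).le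
        exact monotone_succ_div_cesaroNum (by linarith) hα₁ (Finset.mem_range_succ_iff.mp hv)
    _ = ((n : ℝ) + 1) / cesaroNum α n * cesaroNum α n := by
        have hreflect := Finset.sum_range_reflect (cesaroNum (α - 1)) (n + 1)
        rw [Nat.add_sub_cancel] at hreflect
        rw [← Finset.mul_sum, hreflect, sum_range_cesaroNum hβ, sub_add_cancel]
    _ = n + 1 := div_mul_cancel₀ _ hA.ne'

/-- For the Cesàro matrix of order `0 < α ≤ 1`, with `φ_n = 1/A_n^α = c_{nn}`,
one has `Σ_{v=0}^n |c_{vv} ĉ_{n,v+1}| = O(φ_n)`. -/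
theorem cesaro_diag_hat_sum_bound (α : ℝ) (hα0 : 0 < α) (hα1 : α ≤ 1)
    (c chat : ℕ → ℕ → ℝ)
    (hc : ∀ n v : ℕ, v ≤ n → c n v = cesaroNum (α - 1) (n - v) / cesaroNum α n)
    (hchat : ∀ n i : ℕ, 1 ≤ i → i ≤ n →
      chat n i = (i : ℝ) * cesaroNum (α - 1) (n - i) / ((n : ℝ) * cesaroNum α n))
    (hchat0 : ∀ n i : ℕ, n < i → chat n i = 0) :
    ∃ C : ℝ, ∀ n : ℕ, 1 ≤ n →
      ∑ v ∈ Finset.range (n + 1), |c v v * chat n (v + 1)| ≤ C * (1 / cesaroNum α n) := by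
  refine ⟨1, fun n hn ↦ ?_⟩
  obtain ⟨m, rfl⟩ : ∃ m, n = m + 1 := ⟨n - 1, by omega⟩
  have hβ : (-1 : ℝ) < α - 1 := by linarith
  have hA := cesaroNum_pos (show (-1 : ℝ) < α by linarith) (m + 1)
  have hterm : ∀ v ∈ Finset.range (m + 1), |c v v * chat (m + 1) (v + 1)| =
      ((v : ℝ) + 1) / cesaroNum α v * cesaroNum (α - 1) (m - v)
        / ((m + 1) * cesaroNum α (m + 1)) := by
    intro v hv
    have hv := Finset.mem_range_succ_iff.mp hv
    rw [hc v v le_rfl, Nat.sub_self, cesaroNum_zero hβ, hchat _ _ (by omega) (by omega),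
      show m + 1 - (v + 1) = m - v by omega, abs_of_nonneg]
    · push_cast; ring
    · have := cesaroNum_pos hβ (m - v)
      have := cesaroNum_pos (show (-1 : ℝ) < α by linarith) v
      positivity
  rw [Finset.sum_range_succ, hchat0 _ _ (by omega), mul_zero, abs_zero, add_zero,
    Finset.sum_congr rfl hterm, ← Finset.sum_div, div_le_iff₀ (by positivity)]
  calc _ ≤ (m : ℝ) + 1 := sum_succ_div_cesaroNum_mul_le hα0 hα1 m
    _ = 1 * (1 / cesaroNum α (m + 1)) * ((m + 1) * cesaroNum α (m + 1)) := by
        field_simp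
end

section
/- For the Rhaly generalized Cesàro matrix D with parameter 0 < t < 1 one has the bound |d̂_{nv}| = O(1/(n(n+1)) + t^{n-v}/(n+1)) uniformly in 0 ≤ v ≤ n-1, and consequently Σ_{v=0}^n |d_{vv} d̂_{n,v+1}| = O(1/n) as n → ∞. -/
/-!
Writing `s = t ^ (n - v)`, the entry is `d̂_{nv} = (s (1 + n (1 - t)) - 1) / ((1 - t) n (n + 1))`,
and `0 ≤ s (1 + n (1 - t)) ≤ s (n + 1)` gives the first bound with `C = 2 / (1 - t)`; it extends
to `v = n`, where `d̂_{nn} = 1 / (n + 1)`. In the sum, `|d_{vv}| ≤ 1`, the term `v = n` vanishes,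
and the majorants add up to `C (1 + Σ_{k<n} t^k) / (n + 1) ≤ C (1 + 1 / (1 - t)) / n`.
-/

open Finset

lemma abs_rhaly_hat_entry_le {t s x : ℝ} (ht0 : 0 ≤ t) (ht1 : t < 1) (hs : 0 ≤ s)
    (hx : 1 ≤ x) :
    |1 / (1 - t) * ((1 - s * t) / (x + 1) - (1 - s) / x)| ≤
      2 / (1 - t) * (1 / (x * (x + 1)) + s / (x + 1)) := by
  have hst : 0 < 1 - t := by linarith
  have hx0 : 0 < x := by linarith
  have hentry : 1 / (1 - t) * ((1 - s * t) / (x + 1) - (1 - s) / x) =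
      (s * (1 + x * (1 - t)) - 1) / ((1 - t) * (x * (x + 1))) := by
    field_simp
    ring
  have hmajorant : 2 / (1 - t) * (1 / (x * (x + 1)) + s / (x + 1)) =
      2 * (1 + s * x) / ((1 - t) * (x * (x + 1))) := by
    field_simp
  rw [hentry, hmajorant, abs_div, abs_of_pos (show 0 < (1 - t) * (x * (x + 1)) by positivity)]
  gcongr
  rw [abs_le]
  constructor
  · nlinarith [mul_nonneg hs (show 0 ≤ 1 + x * (1 - t) by nlinarith)]
  · nlinarith [mul_nonneg (mul_nonneg hs hx0.le) ht0, mul_nonneg hs (sub_nonneg.mpr hx)]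

lemma sum_rhaly_hat_majorant_le {t : ℝ} (ht0 : 0 ≤ t) (ht1 : t < 1) {n : ℕ} (hn : 1 ≤ n) :
    ∑ v ∈ range n, (1 / ((n : ℝ) * ((n : ℝ) + 1)) + t ^ (n - (v + 1)) / ((n : ℝ) + 1)) ≤
      (1 + 1 / (1 - t)) / n := by
  have hn0 : (0 : ℝ) < n := by exact_mod_cast hn
  have hgeom : ∑ v ∈ range n, t ^ (n - (v + 1)) ≤ 1 / (1 - t) := by
    calc ∑ v ∈ range n, t ^ (n - (v + 1))
        = ∑ v ∈ range n, t ^ (n - 1 - v) :=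
          sum_congr rfl fun v _ => by rw [Nat.sub_sub, Nat.add_comm]
      _ = ∑ k ∈ range n, t ^ k := sum_range_reflect (fun k => t ^ k) n
      _ ≤ t ^ 0 / (1 - t) := by rw [range_eq_Ico]; exact geom_sum_Ico_le_of_lt_one ht0 ht1
      _ = 1 / (1 - t) := by rw [pow_zero]
  rw [sum_add_distrib, sum_const, card_range, nsmul_eq_mul, ← sum_div]
  calc (n : ℝ) * (1 / ((n : ℝ) * ((n : ℝ) + 1))) + (∑ v ∈ range n, t ^ (n - (v + 1))) / (n + 1)
      ≤ (1 + 1 / (1 - t)) / (n + 1) := by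
        rw [mul_one_div, div_mul_cancel_left₀ hn0.ne', ← one_div, add_div]
        gcongr
    _ ≤ (1 + 1 / (1 - t)) / n := by
        have : 0 < 1 - t := by linarith
        gcongr
        linarith

/-- For the Rhaly generalized Cesàro matrix with `0 < t < 1`:
`|d̂_{nv}| = O(1/(n(n+1)) + t^{n-v}/(n+1))` uniformly in `0 ≤ v ≤ n-1`, and
`Σ_{v=0}^n |d_{vv} d̂_{n,v+1}| = O(1/n)`. -/
theorem rhaly_hat_bounds (t : ℝ) (ht0 : 0 < t) (ht1 : t < 1)
    (d dhat : ℕ → ℕ → ℝ)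
    (hd : ∀ n k : ℕ, k ≤ n → d n k = t ^ (n - k) / ((n : ℝ) + 1))
    (hdhat : ∀ n v : ℕ, 1 ≤ n → v ≤ n - 1 →
      dhat n v = (1 / (1 - t)) *
        ((1 - t ^ (n - v + 1)) / ((n : ℝ) + 1) - (1 - t ^ (n - v)) / (n : ℝ)))
    (hdhatd : ∀ n : ℕ, dhat n n = d n n)
    (hdhat0 : ∀ n v : ℕ, n < v → dhat n v = 0) :
    (∃ C : ℝ, ∀ n v : ℕ, 1 ≤ n → v ≤ n - 1 →
      |dhat n v| ≤ C * (1 / ((n : ℝ) * ((n : ℝ) + 1)) + t ^ (n - v) / ((n : ℝ) + 1))) ∧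
    (∃ C : ℝ, ∀ n : ℕ, 1 ≤ n →
      ∑ v ∈ Finset.range (n + 1), |d v v * dhat n (v + 1)| ≤ C / n) := by
  have hC : 1 ≤ 2 / (1 - t) := by rw [le_div_iff₀ (by linarith)]; linarith
  have hdiag : ∀ v, d v v = 1 / ((v : ℝ) + 1) := fun v => by simp [hd v v le_rfl]
  have hbound : ∀ n w : ℕ, 1 ≤ n → w ≤ n →
      |dhat n w| ≤ 2 / (1 - t) * (1 / ((n : ℝ) * ((n : ℝ) + 1)) + t ^ (n - w) / ((n : ℝ) + 1)) := by
    intro n w hn hw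
    rcases hw.lt_or_eq with hw | rfl
    · rw [hdhat n w hn (by omega), pow_succ]
      exact abs_rhaly_hat_entry_le ht0.le ht1 (by positivity) (by exact_mod_cast hn)
    · rw [hdhatd, hdiag, Nat.sub_self, pow_zero, abs_of_pos (by positivity)]
      calc 1 / ((w : ℝ) + 1) ≤ 1 / ((w : ℝ) * ((w : ℝ) + 1)) + 1 / ((w : ℝ) + 1) :=
            le_add_of_nonneg_left (by positivity)
        _ ≤ _ := le_mul_of_one_le_left (by positivity) hC
  refine ⟨⟨_, fun n v hn hv => hbound n v hn (by omega)⟩, ⟨2 / (1 - t) * (1 + 1 / (1 - t)), ?_⟩⟩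
  intro n hn
  rw [sum_range_succ, hdhat0 n (n + 1) n.lt_succ_self, mul_zero, abs_zero, add_zero]
  calc ∑ v ∈ range n, |d v v * dhat n (v + 1)|
      ≤ ∑ v ∈ range n, 2 / (1 - t) *
          (1 / ((n : ℝ) * ((n : ℝ) + 1)) + t ^ (n - (v + 1)) / ((n : ℝ) + 1)) := by
        refine sum_le_sum fun v hv => ?_
        have hdiag_le : |d v v| ≤ 1 := by
          rw [hdiag, abs_of_pos (by positivity), div_le_one (by positivity)]
          linarith [v.cast_nonneg (α := ℝ)]
        rw [abs_mul]
        exact (mul_le_of_le_one_left (abs_nonneg _) hdiag_le).trans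
          (hbound n (v + 1) hn (mem_range.mp hv))
    _ ≤ 2 / (1 - t) * ((1 + 1 / (1 - t)) / n) := by
        rw [← mul_sum]
        gcongr
        exact sum_rhaly_hat_majorant_le ht0.le ht1 hn
    _ = _ := mul_div_assoc _ _ _ |>.symm
end

section
/- For the p-Cesàro matrix E with 1 < p ≤ 2, one has Σ_{v=1}^n |e_{vv} ê_{n,v+1}| = O(n^{-p}) as n → ∞. -/
/-!
Since `e_{vv} = (v+1)^{-p}` is summable for `p > 1`, it suffices to bound every `ê_{n,w}` with
`1 ≤ w ≤ n` by `(p+1) n^{-p}`. For such `w` (the diagonal `w = n` included),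
`ê_{n,w} = n^{-p} - (n-w+1)(n^{-p} - (n+1)^{-p})`, and Bernoulli's inequality gives
`n^{-p} - (n+1)^{-p} ≤ p n^{-p} / (n+1)`, so the second term is at most `p n^{-p}`.
-/

open Real Finset

lemma rpow_neg_sub_rpow_neg_add_one_le {p x : ℝ} (hp : 1 ≤ p) (hx : 0 < x) :
    x ^ (-p) - (x + 1) ^ (-p) ≤ p * x ^ (-p) / (x + 1) := by
  have hx1 : 0 < x + 1 := by linarith
  have hbernoulli := one_add_mul_self_le_rpow_one_add (s := -1 / (x + 1))
    (by rw [neg_div, neg_le_neg_iff, div_le_one hx1]; linarith) hp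
  have hbase : 1 + -1 / (x + 1) = x / (x + 1) := by field_simp; ring
  have hfactor : (x + 1) ^ (-p) = x ^ (-p) * (x / (x + 1)) ^ p := by
    rw [div_rpow hx.le hx1.le, rpow_neg hx.le, rpow_neg hx1.le]
    field_simp [(rpow_pos_of_pos hx p).ne']
  rw [hbase] at hbernoulli
  calc x ^ (-p) - (x + 1) ^ (-p) = x ^ (-p) * (1 - (x / (x + 1)) ^ p) := by rw [hfactor]; ring
    _ ≤ x ^ (-p) * (p / (x + 1)) := by
        gcongr
        linarith [show p * (-1 / (x + 1)) = -(p / (x + 1)) by ring]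
    _ = p * x ^ (-p) / (x + 1) := by ring

lemma abs_mul_sub_add_rpow_neg_le {p x m : ℝ} (hp : 1 ≤ p) (hx : 0 < x) (hm : 0 ≤ m)
    (hmx : m ≤ x) : |m * ((x + 1) ^ (-p) - x ^ (-p)) + x ^ (-p)| ≤ (p + 1) * x ^ (-p) := by
  set d := x ^ (-p) - (x + 1) ^ (-p)
  have hd0 : 0 ≤ d := sub_nonneg.2 (rpow_le_rpow_of_nonpos hx (by linarith) (by linarith))
  have hxp : 0 < x ^ (-p) := rpow_pos_of_pos hx _
  have hmd : m * d ≤ p * x ^ (-p) :=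
    calc m * d ≤ x * (p * x ^ (-p) / (x + 1)) :=
          mul_le_mul hmx (rpow_neg_sub_rpow_neg_add_one_le hp hx) hd0 hx.le
      _ ≤ p * x ^ (-p) := by
          rw [mul_div_assoc', div_le_iff₀ (by linarith)]
          nlinarith
  have hexpr : m * ((x + 1) ^ (-p) - x ^ (-p)) + x ^ (-p) = x ^ (-p) - m * d := by ring
  rw [hexpr, abs_le]
  constructor <;> nlinarith

lemma summable_add_one_rpow_neg {p : ℝ} (hp : 1 < p) :
    Summable fun v : ℕ ↦ ((v : ℝ) + 1) ^ (-p) := by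
  have h := (summable_nat_add_iff 1).2 (Real.summable_nat_rpow.2 (by linarith : -p < -1))
  simpa using h

lemma ehat_eq_of_le {p : ℝ} {e ehat : ℕ → ℕ → ℝ}
    (he : ∀ n i : ℕ, i ≤ n → e n i = 1 / ((n : ℝ) + 1) ^ p)
    (hehat : ∀ n v : ℕ, 1 ≤ n → v ≤ n - 1 →
      ehat n v = ((n : ℝ) - v + 1) / ((n : ℝ) + 1) ^ p - ((n : ℝ) - v) / (n : ℝ) ^ p)
    (hehatd : ∀ n : ℕ, ehat n n = e n n) {n w : ℕ} (hn : 1 ≤ n) (hwn : w ≤ n) :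
    ehat n w = ((n : ℝ) - w + 1) * (((n : ℝ) + 1) ^ (-p) - (n : ℝ) ^ (-p)) + (n : ℝ) ^ (-p) := by
  have hx : (0 : ℝ) < n := by exact_mod_cast hn
  rw [rpow_neg hx.le, rpow_neg (by positivity)]
  rcases hwn.lt_or_eq with hlt | rfl
  · rw [hehat n w hn (by omega)]
    ring
  · rw [hehatd, he w w le_rfl]
    ring

lemma abs_ehat_le {p : ℝ} (hp : 1 ≤ p) {e ehat : ℕ → ℕ → ℝ}
    (he : ∀ n i : ℕ, i ≤ n → e n i = 1 / ((n : ℝ) + 1) ^ p)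
    (hehat : ∀ n v : ℕ, 1 ≤ n → v ≤ n - 1 →
      ehat n v = ((n : ℝ) - v + 1) / ((n : ℝ) + 1) ^ p - ((n : ℝ) - v) / (n : ℝ) ^ p)
    (hehatd : ∀ n : ℕ, ehat n n = e n n) (hehat0 : ∀ n v : ℕ, n < v → ehat n v = 0)
    {n w : ℕ} (hn : 1 ≤ n) (hw : 1 ≤ w) : |ehat n w| ≤ (p + 1) * (n : ℝ) ^ (-p) := by
  have hx : (0 : ℝ) < n := by exact_mod_cast hn
  rcases le_or_gt w n with hwn | hnw
  · rw [ehat_eq_of_le he hehat hehatd hn hwn]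
    have hw' : (1 : ℝ) ≤ w := by exact_mod_cast hw
    have hwn' : (w : ℝ) ≤ n := by exact_mod_cast hwn
    exact abs_mul_sub_add_rpow_neg_le hp hx (by linarith) (by linarith)
  · rw [hehat0 n w hnw, abs_zero]
    have := rpow_pos_of_pos hx (-p)
    positivity

theorem pCesaro_diag_hat_sum_bound_general (p : ℝ) (hp1 : 1 < p)
    (e ehat : ℕ → ℕ → ℝ)
    (he : ∀ n i : ℕ, i ≤ n → e n i = 1 / ((n : ℝ) + 1) ^ p)
    (hehat : ∀ n v : ℕ, 1 ≤ n → v ≤ n - 1 →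
      ehat n v = ((n : ℝ) - v + 1) / ((n : ℝ) + 1) ^ p - ((n : ℝ) - v) / (n : ℝ) ^ p)
    (hehatd : ∀ n : ℕ, ehat n n = e n n)
    (hehat0 : ∀ n v : ℕ, n < v → ehat n v = 0) :
    ∃ C : ℝ, ∀ n : ℕ, 1 ≤ n →
      ∑ v ∈ Finset.Icc 1 n, |e v v * ehat n (v + 1)| ≤ C * (n : ℝ) ^ (-p) := by
  set S := ∑' v : ℕ, ((v : ℝ) + 1) ^ (-p)
  refine ⟨S * (p + 1), fun n hn ↦ ?_⟩
  have hdiag : ∀ v : ℕ, |e v v| = ((v : ℝ) + 1) ^ (-p) := fun v ↦ by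
    rw [he v v le_rfl, rpow_neg (by positivity), one_div, abs_of_nonneg (by positivity)]
  calc ∑ v ∈ Icc 1 n, |e v v * ehat n (v + 1)|
      ≤ ∑ v ∈ Icc 1 n, ((v : ℝ) + 1) ^ (-p) * ((p + 1) * (n : ℝ) ^ (-p)) := by
        refine sum_le_sum fun v _ ↦ ?_
        rw [abs_mul, hdiag]
        exact mul_le_mul_of_nonneg_left
          (abs_ehat_le hp1.le he hehat hehatd hehat0 hn (Nat.le_add_left 1 v)) (by positivity)
    _ = (∑ v ∈ Icc 1 n, ((v : ℝ) + 1) ^ (-p)) * ((p + 1) * (n : ℝ) ^ (-p)) := by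
        rw [sum_mul]
    _ ≤ S * ((p + 1) * (n : ℝ) ^ (-p)) := by
        gcongr
        exact (summable_add_one_rpow_neg hp1).sum_le_tsum _ fun v _ ↦ by positivity
    _ = S * (p + 1) * (n : ℝ) ^ (-p) := by ring

/-- For the `p`-Cesàro matrix with `1 < p ≤ 2`:
`Σ_{v=1}^n |e_{vv} ê_{n,v+1}| = O(n^{-p})`. -/
theorem pCesaro_diag_hat_sum_bound (p : ℝ) (hp1 : 1 < p) (hp2 : p ≤ 2)
    (e ehat : ℕ → ℕ → ℝ)
    (he : ∀ n i : ℕ, i ≤ n → e n i = 1 / ((n : ℝ) + 1) ^ p)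
    (hehat : ∀ n v : ℕ, 1 ≤ n → v ≤ n - 1 →
      ehat n v = ((n : ℝ) - v + 1) / ((n : ℝ) + 1) ^ p - ((n : ℝ) - v) / (n : ℝ) ^ p)
    (hehatd : ∀ n : ℕ, ehat n n = e n n)
    (hehat0 : ∀ n v : ℕ, n < v → ehat n v = 0) :
    ∃ C : ℝ, ∀ n : ℕ, 1 ≤ n →
      ∑ v ∈ Finset.Icc 1 n, |e v v * ehat n (v + 1)| ≤ C * (n : ℝ) ^ (-p) :=
  pCesaro_diag_hat_sum_bound_general p hp1 e ehat he hehat hehatd hehat0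
end

section
/- Let {α_n}, {φ_n} be positive sequences, k ≥ 1, and A a lower triangular matrix such that: (T2) |â_{n,i+1}| = O(φ_n) uniformly in 0 ≤ i ≤ n-1, and (T4) Σ_{n=i+1}^∞ α_n φ_n^{k-1} |â_{n,i+1}| = O(α_i φ_i^{k-1}). Let {λ_n} be a complex sequence with Σ|Δλ_n| < ∞, and {X_n} a sequence with Σ_{i=0}^∞ α_i φ_i^{k-1} |X_i|^k |Δλ_i| < ∞. If {s_n} is bounded, then Σ_{n=1}^∞ α_n |T_{n1}|^k < ∞ where T_{n1} = Σ_{i=0}^{n-1} â_{n,i+1} (Δλ_i) X_i s_i. -/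
lemma holder_aux (s : Finset ℕ) (w z : ℕ → ℝ) (k W : ℝ) (hk : 1 ≤ k)
    (hw : ∀ i ∈ s, 0 ≤ w i) (hz : ∀ i ∈ s, 0 ≤ z i) (hW : ∑ i ∈ s, w i ≤ W) :
    (∑ i ∈ s, w i * z i) ^ k ≤ W ^ (k - 1) * ∑ i ∈ s, w i * z i ^ k := by
  set S := ∑ i ∈ s, w i with hS
  have hS0 : 0 ≤ S := Finset.sum_nonneg hw
  have hsum2 : 0 ≤ ∑ i ∈ s, w i * z i ^ k :=
    Finset.sum_nonneg fun i hi => mul_nonneg (hw i hi) (Real.rpow_nonneg (hz i hi) k)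
  rcases eq_or_lt_of_le hS0 with h0 | hpos
  · have hz0 : ∀ i ∈ s, w i = 0 := (Finset.sum_eq_zero_iff_of_nonneg hw).mp h0.symm
    have : ∑ i ∈ s, w i * z i = 0 := Finset.sum_eq_zero fun i hi => by rw [hz0 i hi, zero_mul]
    rw [this, Real.zero_rpow (by linarith)]
    exact mul_nonneg (Real.rpow_nonneg (le_trans hS0 hW) _) hsum2
  · have key := Real.rpow_arith_mean_le_arith_mean_rpow s (fun i => w i / S) z
      (fun i hi => div_nonneg (hw i hi) hS0) ?_ hz hk
    · have h1 : ∑ i ∈ s, w i / S * z i = (∑ i ∈ s, w i * z i) / S := by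
        rw [Finset.sum_div]; exact Finset.sum_congr rfl fun i _ => by ring
      have h2 : ∑ i ∈ s, w i / S * z i ^ k = (∑ i ∈ s, w i * z i ^ k) / S := by
        rw [Finset.sum_div]; exact Finset.sum_congr rfl fun i _ => by ring
      rw [h1, h2] at key
      have hsz : 0 ≤ ∑ i ∈ s, w i * z i :=
        Finset.sum_nonneg fun i hi => mul_nonneg (hw i hi) (hz i hi)
      rw [Real.div_rpow hsz hS0] at key
      have hSk : (0:ℝ) < S ^ k := Real.rpow_pos_of_pos hpos k
      have step : (∑ i ∈ s, w i * z i) ^ k ≤ S ^ (k - 1) * ∑ i ∈ s, w i * z i ^ k := by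
        rw [div_le_div_iff₀ hSk hpos] at key
        rw [Real.rpow_sub hpos, Real.rpow_one, div_mul_eq_mul_div, le_div_iff₀ hpos]
        linarith [key]
      refine step.trans (mul_le_mul_of_nonneg_right ?_ hsum2)
      exact Real.rpow_le_rpow hS0 hW (by linarith)
    · rw [← Finset.sum_div, div_self hpos.ne']

/-- First-term estimate: under (T2), (T4), `{λ_n} ∈ BV` and the weighted
condition on `X`, boundedness of `{s_n}` implies `Σ α_n |T_{n1}|^k < ∞`. -/
theorem first_term_summable
    (k : ℝ) (hk : 1 ≤ k)
    (α φ : ℕ → ℝ) (hα : ∀ n, 0 < α n) (hφ : ∀ n, 0 < φ n)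
    (Ahat : ℕ → ℕ → ℂ) (lam X s : ℕ → ℂ)
    -- (T2): |â_{n,i+1}| = O(φ_n) uniformly in 0 ≤ i ≤ n-1
    (hT2 : ∃ C : ℝ, ∀ n i : ℕ, 1 ≤ n → i ≤ n - 1 → ‖Ahat n (i + 1)‖ ≤ C * φ n)
    -- (T4): Σ_{n=i+1}^∞ α_n φ_n^{k-1} |â_{n,i+1}| = O(α_i φ_i^{k-1})
    (hT4 : ∃ C : ℝ, ∀ i m : ℕ,
      ∑ n ∈ Finset.Icc (i + 1) m, α n * φ n ^ (k - 1) * ‖Ahat n (i + 1)‖ ≤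
        C * (α i * φ i ^ (k - 1)))
    -- {λ_n} ∈ BV
    (hBV : Summable fun n => ‖lam n - lam (n + 1)‖)
    -- Σ α_i φ_i^{k-1} |X_i|^k |Δλ_i| < ∞
    (hX : Summable fun i => α i * φ i ^ (k - 1) * ‖X i‖ ^ k * ‖lam i - lam (i + 1)‖)
    -- {s_n} bounded
    (hs : ∃ M : ℝ, ∀ n, ‖s n‖ ≤ M) :
    Summable fun n =>
      α n * ‖∑ i ∈ Finset.range n, Ahat n (i + 1) * (lam i - lam (i + 1)) * X i * s i‖ ^ k := by
  obtain ⟨C2, hC2⟩ := hT2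
  obtain ⟨C4, hC4⟩ := hT4
  obtain ⟨M, hM⟩ := hs
  set C2' : ℝ := max C2 0 with hC2'def
  set C4' : ℝ := max C4 0 with hC4'def
  set M' : ℝ := max M 0 with hM'def
  have hC2'0 : 0 ≤ C2' := le_max_right _ _
  have hC4'0 : 0 ≤ C4' := le_max_right _ _
  have hM'0 : 0 ≤ M' := le_max_right _ _
  set d : ℕ → ℝ := fun i => ‖lam i - lam (i + 1)‖ with hddef
  have hd0 : ∀ i, 0 ≤ d i := fun i => norm_nonneg _
  set D : ℝ := ∑' i, d i with hDdef
  have hD0 : 0 ≤ D := tsum_nonneg hd0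
  set g : ℕ → ℝ := fun n =>
    α n * φ n ^ (k - 1) * ∑ i ∈ Finset.range n, ‖Ahat n (i + 1)‖ * d i * ‖X i‖ ^ k with hgdef
  have hg0 : ∀ n, 0 ≤ g n := by
    intro n
    refine mul_nonneg (mul_nonneg (hα n).le (Real.rpow_nonneg (hφ n).le _)) ?_
    exact Finset.sum_nonneg fun i _ =>
      mul_nonneg (mul_nonneg (norm_nonneg _) (hd0 i)) (Real.rpow_nonneg (norm_nonneg _) k)
  -- summability of g via (T4)
  have hgsum : Summable g := by
    refine summable_of_sum_range_le hg0
      (c := C4' * ∑' i, α i * φ i ^ (k - 1) * ‖X i‖ ^ k * ‖lam i - lam (i + 1)‖) ?_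
    intro N
    have swap :
        ∑ n ∈ Finset.range N, g n =
          ∑ i ∈ Finset.range N, ∑ n ∈ Finset.Ioo i N,
            α n * φ n ^ (k - 1) * ‖Ahat n (i + 1)‖ * (d i * ‖X i‖ ^ k) := by
      rw [show (∑ n ∈ Finset.range N, g n) =
          ∑ n ∈ Finset.range N, ∑ i ∈ Finset.range n,
            α n * φ n ^ (k - 1) * ‖Ahat n (i + 1)‖ * (d i * ‖X i‖ ^ k) from
        Finset.sum_congr rfl fun n _ => by
          rw [hgdef]; simp only []; rw [Finset.mul_sum]
          exact Finset.sum_congr rfl fun i _ => by ring]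
      refine Finset.sum_comm' ?_
      intro x y
      simp only [Finset.mem_range, Finset.mem_Ioo]
      omega
    rw [swap]
    have inner : ∀ i ∈ Finset.range N,
        (∑ n ∈ Finset.Ioo i N, α n * φ n ^ (k - 1) * ‖Ahat n (i + 1)‖ * (d i * ‖X i‖ ^ k)) ≤
          C4' * (α i * φ i ^ (k - 1) * ‖X i‖ ^ k * ‖lam i - lam (i + 1)‖) := by
      intro i _
      have hIoo : Finset.Ioo i N = Finset.Icc (i + 1) (N - 1) := by
        ext n; simp only [Finset.mem_Ioo, Finset.mem_Icc]; omega
      rw [← Finset.sum_mul]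
      have h1 : (∑ n ∈ Finset.Ioo i N, α n * φ n ^ (k - 1) * ‖Ahat n (i + 1)‖) ≤
          C4' * (α i * φ i ^ (k - 1)) := by
        rw [hIoo]
        refine (hC4 i (N - 1)).trans ?_
        refine mul_le_mul_of_nonneg_right (le_max_left _ _) ?_
        exact mul_nonneg (hα i).le (Real.rpow_nonneg (hφ i).le _)
      calc (∑ n ∈ Finset.Ioo i N, α n * φ n ^ (k - 1) * ‖Ahat n (i + 1)‖) * (d i * ‖X i‖ ^ k)
          ≤ C4' * (α i * φ i ^ (k - 1)) * (d i * ‖X i‖ ^ k) := by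
            refine mul_le_mul_of_nonneg_right h1 ?_
            exact mul_nonneg (hd0 i) (Real.rpow_nonneg (norm_nonneg _) k)
        _ = C4' * (α i * φ i ^ (k - 1) * ‖X i‖ ^ k * ‖lam i - lam (i + 1)‖) := by
            rw [hddef]; ring
    refine (Finset.sum_le_sum inner).trans ?_
    rw [← Finset.mul_sum]
    refine mul_le_mul_of_nonneg_left ?_ hC4'0
    refine Summable.sum_le_tsum _ (fun i _ => ?_) hX
    refine mul_nonneg (mul_nonneg (mul_nonneg (hα i).le
      (Real.rpow_nonneg (hφ i).le _)) (Real.rpow_nonneg (norm_nonneg _) k)) (norm_nonneg _)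
  -- pointwise comparison
  refine Summable.of_nonneg_of_le
    (fun n => mul_nonneg (hα n).le (Real.rpow_nonneg (norm_nonneg _) k)) ?_
    (hgsum.mul_left ((C2' * D) ^ (k - 1) * M' ^ k))
  intro n
  set w : ℕ → ℝ := fun i => ‖Ahat n (i + 1)‖ * d i with hwdef
  set z : ℕ → ℝ := fun i => ‖X i‖ * M' with hzdef
  have hw0 : ∀ i ∈ Finset.range n, 0 ≤ w i := fun i _ => mul_nonneg (norm_nonneg _) (hd0 i)
  have hz0 : ∀ i ∈ Finset.range n, 0 ≤ z i := fun i _ => mul_nonneg (norm_nonneg _) hM'0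
  have hTle : ‖∑ i ∈ Finset.range n, Ahat n (i + 1) * (lam i - lam (i + 1)) * X i * s i‖ ≤
      ∑ i ∈ Finset.range n, w i * z i := by
    refine (norm_sum_le _ _).trans (Finset.sum_le_sum fun i _ => ?_)
    rw [norm_mul, norm_mul, norm_mul]
    have h1 : ‖s i‖ ≤ M' := (hM i).trans (le_max_left _ _)
    calc ‖Ahat n (i + 1)‖ * ‖lam i - lam (i + 1)‖ * ‖X i‖ * ‖s i‖
        ≤ ‖Ahat n (i + 1)‖ * ‖lam i - lam (i + 1)‖ * ‖X i‖ * M' := by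
          refine mul_le_mul_of_nonneg_left h1 ?_
          positivity
      _ = w i * z i := by
          show _ = ‖Ahat n (i + 1)‖ * ‖lam i - lam (i + 1)‖ * (‖X i‖ * M')
          ring
  have hWsum : ∑ i ∈ Finset.range n, w i ≤ C2' * φ n * D := by
    rcases Nat.eq_zero_or_pos n with rfl | hn
    · simp only [Finset.range_zero, Finset.sum_empty]
      exact mul_nonneg (mul_nonneg hC2'0 (hφ 0).le) hD0
    · have step : ∀ i ∈ Finset.range n, w i ≤ C2' * φ n * d i := by
        intro i hi
        rw [hwdef]
        refine mul_le_mul_of_nonneg_right ?_ (hd0 i)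
        refine (hC2 n i hn (by simp only [Finset.mem_range] at hi; omega)).trans ?_
        exact mul_le_mul_of_nonneg_right (le_max_left _ _) (hφ n).le
      refine (Finset.sum_le_sum step).trans ?_
      rw [← Finset.mul_sum]
      exact mul_le_mul_of_nonneg_left (Summable.sum_le_tsum _ (fun i _ => hd0 i) hBV) (mul_nonneg hC2'0 (hφ n).le)
  have holder := holder_aux (Finset.range n) w z k (C2' * φ n * D) hk hw0 hz0 hWsum
  have hnorm : ‖∑ i ∈ Finset.range n, Ahat n (i + 1) * (lam i - lam (i + 1)) * X i * s i‖ ^ k ≤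
      (∑ i ∈ Finset.range n, w i * z i) ^ k :=
    Real.rpow_le_rpow (norm_nonneg _) hTle (by linarith)
  have hsplit : (C2' * φ n * D) ^ (k - 1) = (C2' * D) ^ (k - 1) * φ n ^ (k - 1) := by
    rw [show C2' * φ n * D = (C2' * D) * φ n by ring,
      Real.mul_rpow (mul_nonneg hC2'0 hD0) (hφ n).le]
  have hzk : ∀ i ∈ Finset.range n, w i * z i ^ k = M' ^ k * (w i * ‖X i‖ ^ k) := by
    intro i _
    rw [hzdef]
    simp only []
    rw [Real.mul_rpow (norm_nonneg _) hM'0]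
    ring
  calc α n * ‖∑ i ∈ Finset.range n, Ahat n (i + 1) * (lam i - lam (i + 1)) * X i * s i‖ ^ k
      ≤ α n * ((C2' * φ n * D) ^ (k - 1) * ∑ i ∈ Finset.range n, w i * z i ^ k) :=
        mul_le_mul_of_nonneg_left (hnorm.trans holder) (hα n).le
    _ = (C2' * D) ^ (k - 1) * M' ^ k * g n := by
        rw [hsplit, Finset.sum_congr rfl hzk, ← Finset.mul_sum, hgdef]
        simp only []
        rw [Finset.sum_congr rfl (fun i _ => by rw [hwdef] : ∀ i ∈ Finset.range n,
          ‖Ahat n (i + 1)‖ * d i * ‖X i‖ ^ k = w i * ‖X i‖ ^ k)]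
        ring
end

section
/- For the Cesàro matrix of order α with 0 < α ≤ 1 and φ_n = 1/A_n^α, the remainder sum satisfies the bound: Σ_{v=1}^{⌊n/2⌋} (v+1) A_{n-v-1}^{α-1}/A_v^α = O(n^{1+α} φ_n), i.e., (1/n^{1+α}) Σ_{v=1}^{⌊n/2⌋} (v+1) A_{n-v-1}^{α-1}/A_v^α = O(n^{-2} Σ_{v=1}^{⌊n/2⌋} v^{1-α} + n^{-2α} Σ_{v=1}^{⌊n/2⌋} v^{α-1}) = O(n^{-α}). -/
lemma cesaro_pos {α : ℝ} (hα : -1 < α) (n : ℕ) : 0 < cesaroNum α n := by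
  have h0 : (0:ℝ) ≤ n := n.cast_nonneg
  have h1 : (0:ℝ) < n + α + 1 := by linarith
  have h2 : (0:ℝ) < α + 1 := by linarith
  have h3 : (0:ℝ) < (n:ℝ) + 1 := by positivity
  exact div_pos (Real.Gamma_pos_of_pos h1)
    (mul_pos (Real.Gamma_pos_of_pos h2) (Real.Gamma_pos_of_pos h3))

lemma cesaro_zero {α : ℝ} (hα : -1 < α) : cesaroNum α 0 = 1 := by
  have h2 : (0:ℝ) < α + 1 := by linarith
  simp [cesaroNum, Real.Gamma_one, (Real.Gamma_pos_of_pos h2).ne']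

lemma cesaro_succ {α : ℝ} (hα : -1 < α) (n : ℕ) :
    cesaroNum α (n+1) = cesaroNum α n * (((n:ℝ) + 1 + α) / ((n:ℝ) + 1)) := by
  have h0 : (0:ℝ) ≤ n := n.cast_nonneg
  have hne1 : ((n:ℝ) + α + 1) ≠ 0 := by linarith
  have hne2 : ((n:ℝ) + 1) ≠ 0 := by positivity
  have hG1 : Real.Gamma (α + 1) ≠ 0 := (Real.Gamma_pos_of_pos (by linarith)).ne'
  have hG2 : Real.Gamma ((n:ℝ) + 1) ≠ 0 := (Real.Gamma_pos_of_pos (by linarith)).ne'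
  have e1 : ((n+1 : ℕ):ℝ) + α + 1 = ((n:ℝ) + α + 1) + 1 := by push_cast; ring
  have e2 : ((n+1 : ℕ):ℝ) + 1 = ((n:ℝ) + 1) + 1 := by push_cast; ring
  rw [cesaroNum, cesaroNum, e1, e2, Real.Gamma_add_one hne1, Real.Gamma_add_one hne2]
  field_simp
  ring

lemma cesaro_lower {α : ℝ} (hα0 : 0 < α) (hα1 : α ≤ 1) (v : ℕ) :
    ((v:ℝ) + 1) ^ α ≤ cesaroNum α v := by
  induction v with
  | zero => simp [cesaro_zero (by linarith : (-1:ℝ) < α)]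
  | succ v ih =>
    have h0 : (0:ℝ) ≤ v := v.cast_nonneg
    have hv1 : (0:ℝ) < (v:ℝ) + 1 := by linarith
    have hp : (0:ℝ) ≤ ((v:ℝ) + 1) ^ α := (Real.rpow_pos_of_pos hv1 α).le
    rw [cesaro_succ (by linarith) v]
    push_cast
    have hfrac : (0:ℝ) ≤ ((v:ℝ) + 1 + α) / ((v:ℝ) + 1) := by positivity
    have key : ((v:ℝ) + 1 + 1) ^ α ≤ ((v:ℝ) + 1) ^ α * (((v:ℝ) + 1 + α) / ((v:ℝ) + 1)) := by
      have e : (v:ℝ) + 1 + 1 = ((v:ℝ) + 1) * (1 + 1/((v:ℝ)+1)) := by field_simp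
      rw [e, Real.mul_rpow hv1.le (by positivity)]
      refine mul_le_mul_of_nonneg_left ?_ hp
      have hs : (-1:ℝ) ≤ 1/((v:ℝ)+1) := by
        have : (0:ℝ) ≤ 1/((v:ℝ)+1) := by positivity
        linarith
      calc (1 + 1/((v:ℝ)+1)) ^ α ≤ 1 + α * (1/((v:ℝ)+1)) :=
            rpow_one_add_le_one_add_mul_self hs hα0.le hα1
        _ = ((v:ℝ) + 1 + α) / ((v:ℝ) + 1) := by field_simp
    exact key.trans (mul_le_mul_of_nonneg_right ih hfrac)

lemma cesaro_upper {α : ℝ} (hα0 : 0 < α) (hα1 : α ≤ 1) (m : ℕ) :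
    cesaroNum (α - 1) m ≤ ((m:ℝ) + 1) ^ (α - 1) := by
  induction m with
  | zero => simp [cesaro_zero (by linarith : (-1:ℝ) < α - 1)]
  | succ m ih =>
    have h0 : (0:ℝ) ≤ m := m.cast_nonneg
    have hm1 : (0:ℝ) < (m:ℝ) + 1 := by linarith
    have hm2 : (0:ℝ) < (m:ℝ) + 2 := by linarith
    have hma : (0:ℝ) < (m:ℝ) + α := by linarith
    rw [cesaro_succ (by linarith) m]
    have hq : (0:ℝ) ≤ ((m:ℝ) + 1 + (α-1)) / ((m:ℝ) + 1) := by
      apply div_nonneg _ hm1.le; linarith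
    have step1 : cesaroNum (α-1) m * (((m:ℝ) + 1 + (α-1)) / ((m:ℝ) + 1)) ≤
        ((m:ℝ) + 1) ^ (α - 1) * (((m:ℝ) + α) / ((m:ℝ) + 1)) := by
      have e : (m:ℝ) + 1 + (α - 1) = (m:ℝ) + α := by ring
      rw [e] at hq ⊢
      exact mul_le_mul_of_nonneg_right ih hq
    refine step1.trans ?_
    have hr : (0:ℝ) < ((m:ℝ)+2)/((m:ℝ)+1) := by positivity
    have e : ((m+1:ℕ):ℝ) + 1 = ((m:ℝ) + 1) * (((m:ℝ)+2)/((m:ℝ)+1)) := by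
      push_cast; field_simp; ring
    rw [e, Real.mul_rpow hm1.le hr.le]
    refine mul_le_mul_of_nonneg_left ?_ (Real.rpow_pos_of_pos hm1 _).le
    -- (m+α)/(m+1) ≤ (((m+2)/(m+1)))^(α-1)
    have hber : (((m:ℝ)+2)/((m:ℝ)+1)) ^ (1 - α) ≤ ((m:ℝ) + 2 - α) / ((m:ℝ) + 1) := by
      have e2 : ((m:ℝ)+2)/((m:ℝ)+1) = 1 + 1/((m:ℝ)+1) := by field_simp; ring
      rw [e2]
      have hs : (-1:ℝ) ≤ 1/((m:ℝ)+1) := by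
        have : (0:ℝ) ≤ 1/((m:ℝ)+1) := by positivity
        linarith
      calc (1 + 1/((m:ℝ)+1)) ^ (1-α) ≤ 1 + (1-α) * (1/((m:ℝ)+1)) :=
            rpow_one_add_le_one_add_mul_self hs (by linarith) (by linarith)
        _ = ((m:ℝ) + 2 - α) / ((m:ℝ) + 1) := by field_simp; ring
    have hneg : (((m:ℝ)+2)/((m:ℝ)+1)) ^ (α - 1) = ((((m:ℝ)+2)/((m:ℝ)+1)) ^ (1 - α))⁻¹ := by
      rw [← Real.rpow_neg hr.le]; ring_nf
    rw [hneg, le_inv_comm₀ (by positivity) (Real.rpow_pos_of_pos hr _)]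
    refine hber.trans ?_
    rw [inv_div, div_le_div_iff₀ (by positivity) hma]
    nlinarith [sq_nonneg (1 - α)]

/-- For `0 < α ≤ 1`:
`(1/n^{1+α}) Σ_{v=1}^{⌊n/2⌋} (v+1) A_{n-v-1}^{α-1}/A_v^α = O(n^{-α})`. -/
theorem cesaro_remainder_sum_bound (α : ℝ) (hα0 : 0 < α) (hα1 : α ≤ 1) :
    ∃ C : ℝ, ∀ n : ℕ, 2 ≤ n →
      (1 / (n : ℝ) ^ (1 + α)) *
        ∑ v ∈ Finset.Icc 1 (n / 2),
          ((v : ℝ) + 1) * cesaroNum (α - 1) (n - v - 1) / cesaroNum α v ≤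
      C * (n : ℝ) ^ (-α) := by
  refine ⟨1, fun n hn => ?_⟩
  have hn0 : (0:ℝ) < n := by positivity
  have hn2 : (2:ℝ) ≤ n := by exact_mod_cast hn
  have hterm : ∀ v ∈ Finset.Icc 1 (n / 2),
      ((v : ℝ) + 1) * cesaroNum (α - 1) (n - v - 1) / cesaroNum α v ≤ 2 := by
    intro v hv
    obtain ⟨hv1, hv2⟩ := Finset.mem_Icc.mp hv
    have hvlt : v < n := lt_of_le_of_lt hv2 (Nat.div_lt_self (by omega) one_lt_two)
    have hvn : ((v:ℝ)) ≤ (n:ℝ)/2 := by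
      have h2v : 2 * v ≤ n := by omega
      have := (Nat.cast_le (α := ℝ)).mpr h2v
      push_cast at this; linarith
    have hcast : ((n - v - 1 : ℕ) : ℝ) + 1 = (n:ℝ) - v := by
      have h1 : (n - v - 1 : ℕ) = n - (v+1) := by omega
      rw [h1, Nat.cast_sub (by omega)]; push_cast; ring
    have hnv : (0:ℝ) < (n:ℝ) - v := by linarith
    have hAle : cesaroNum (α - 1) (n - v - 1) ≤ ((n:ℝ) - v) ^ (α - 1) := by
      have := cesaro_upper hα0 hα1 (n - v - 1)
      rwa [hcast] at this
    have hBge : ((v:ℝ) + 1) ^ α ≤ cesaroNum α v := cesaro_lower hα0 hα1 v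
    have hBpos : (0:ℝ) < ((v:ℝ) + 1) ^ α := Real.rpow_pos_of_pos (by positivity) _
    have hv1R : (0:ℝ) < (v:ℝ) + 1 := by positivity
    have hvle : (v:ℝ) + 1 ≤ (n:ℝ) := by
      have : v + 1 ≤ n := by omega
      exact_mod_cast this
    calc ((v : ℝ) + 1) * cesaroNum (α - 1) (n - v - 1) / cesaroNum α v
        ≤ ((v:ℝ) + 1) * ((n:ℝ) - v) ^ (α - 1) / (((v:ℝ) + 1) ^ α) := by
          apply div_le_div₀ (by positivity) _ hBpos hBge
          exact mul_le_mul_of_nonneg_left hAle hv1R.le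
      _ = ((v:ℝ) + 1) ^ (1 - α) * ((n:ℝ) - v) ^ (α - 1) := by
          rw [Real.rpow_sub hv1R, Real.rpow_one]
          field_simp
      _ ≤ (n:ℝ) ^ (1 - α) * (2 * (n:ℝ) ^ (α - 1)) := by
          apply mul_le_mul _ _ (Real.rpow_nonneg hnv.le _) (by positivity)
          · exact Real.rpow_le_rpow (by positivity) hvle (by linarith)
          · calc ((n:ℝ) - v) ^ (α - 1) ≤ ((n:ℝ)/2) ^ (α - 1) :=
                  Real.rpow_le_rpow_of_nonpos (by positivity) (by linarith) (by linarith)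
              _ = (n:ℝ) ^ (α-1) * ((2:ℝ)⁻¹) ^ (α-1) := by
                  rw [div_eq_mul_inv, Real.mul_rpow hn0.le (by positivity)]
              _ ≤ 2 * (n:ℝ) ^ (α - 1) := by
                  rw [mul_comm]
                  apply mul_le_mul_of_nonneg_right _ (Real.rpow_nonneg hn0.le _)
                  calc ((2:ℝ)⁻¹) ^ (α-1) = (2:ℝ) ^ (1-α) := by
                        rw [← Real.rpow_neg_one 2,
                          ← Real.rpow_mul (by norm_num : (0:ℝ) ≤ 2)]
                        congr 1; ring
                    _ ≤ (2:ℝ) ^ (1:ℝ) :=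
                        Real.rpow_le_rpow_of_exponent_le one_le_two (by linarith)
                    _ = 2 := Real.rpow_one 2
      _ = 2 := by
          rw [mul_comm ((n:ℝ) ^ (1-α)) _, mul_assoc, ← Real.rpow_add hn0]
          norm_num
  have hsum : ∑ v ∈ Finset.Icc 1 (n / 2),
      ((v : ℝ) + 1) * cesaroNum (α - 1) (n - v - 1) / cesaroNum α v ≤ (n:ℝ) := by
    calc _ ≤ ∑ v ∈ Finset.Icc 1 (n / 2), (2:ℝ) := Finset.sum_le_sum hterm
      _ = ((n/2 : ℕ) : ℝ) * 2 := by
          rw [Finset.sum_const, Nat.card_Icc]; simp [mul_comm]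
      _ ≤ (n:ℝ) := by
          have h : (n/2) * 2 ≤ n := by omega
          calc ((n/2 : ℕ) : ℝ) * 2 = (((n/2) * 2 : ℕ) : ℝ) := by push_cast; ring
            _ ≤ (n:ℝ) := by exact_mod_cast h
  have hpow : (0:ℝ) < (n:ℝ) ^ (1 + α) := Real.rpow_pos_of_pos hn0 _
  calc (1 / (n : ℝ) ^ (1 + α)) * ∑ v ∈ Finset.Icc 1 (n / 2),
          ((v : ℝ) + 1) * cesaroNum (α - 1) (n - v - 1) / cesaroNum α v
      ≤ (1 / (n : ℝ) ^ (1 + α)) * (n:ℝ) := by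
        apply mul_le_mul_of_nonneg_left hsum (by positivity)
    _ = 1 * (n:ℝ) ^ (-α) := by
        rw [one_mul, div_mul_eq_mul_div, one_mul, eq_comm, eq_div_iff hpow.ne',
          ← Real.rpow_add hn0]
        norm_num
end

section
/- If {λ_n} is a convex real sequence (Δ²λ_n ≥ 0 for all n) such that Σ λ_n/n converges, then {λ_n} ∈ BV (i.e., Σ |λ_n - λ_{n+1}| < ∞) and λ_{n+1} = O(λ_n). -/
/-!
Convexity says that the increments `λ (n + 1) - λ n` increase. If one of them were positive,
`λ` would grow at least linearly from there on, contradicting `λ n / n → 0`, which holds because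
`Σ λ n / n` converges; so `λ` is decreasing. If `λ N` were negative, the tail of `Σ λ n / n`
would be dominated by `λ N` times the divergent harmonic series, so `λ` is also nonnegative.
A decreasing sequence bounded below has bounded variation by telescoping, and
`0 ≤ λ (n + 1) ≤ λ n` gives the ratio bound with constant `1`.
-/

open Filter Finset fwdDiff Topology

lemma tendsto_nhds_zero_of_tendsto_sum_Icc {G : Type*} [AddCommGroup G] [TopologicalSpace G]
    [IsTopologicalAddGroup G] {u : ℕ → G} {L : G}
    (h : Tendsto (fun N => ∑ n ∈ Icc 1 N, u n) atTop (𝓝 L)) : Tendsto u atTop (𝓝 0) := by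
  rw [← tendsto_add_atTop_iff_nat 1]
  have hdiff := (h.comp (tendsto_add_atTop_nat 1)).sub h
  rw [sub_self] at hdiff
  refine hdiff.congr fun N => ?_
  simp [sum_Icc_succ_top]

lemma tendsto_harmonic_atTop : Tendsto (fun n => (harmonic n : ℝ)) atTop atTop :=
  tendsto_atTop_mono log_add_one_le_harmonic <|
    Real.tendsto_log_atTop.comp <| tendsto_natCast_atTop_atTop.comp <| tendsto_add_atTop_nat 1

section Sequence

variable {f : ℕ → ℝ}

lemma add_mul_fwdDiff_le (hf : Monotone (Δ_[1] f)) {n m : ℕ} (hnm : n ≤ m) :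
    f n + ((m : ℝ) - n) * Δ_[1] f n ≤ f m := by
  induction m, hnm using Nat.le_induction with
  | base => simp
  | succ m hnm ih =>
    have hstep : Δ_[1] f n ≤ f (m + 1) - f m := hf hnm
    push_cast
    linarith

lemma antitone_of_monotone_fwdDiff_of_tendsto_div (hf : Monotone (Δ_[1] f))
    (h : Tendsto (fun n => f n / n) atTop (𝓝 0)) : Antitone f := by
  refine antitone_nat_of_succ_le fun n => ?_
  by_contra! hlt
  set e := Δ_[1] f n
  have he : 0 < e := sub_pos.2 hlt
  have hlower : Tendsto (fun m : ℕ => e + (f n - n * e) / m) atTop (𝓝 (e + 0)) :=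
    (tendsto_const_div_atTop_nhds_zero_nat _).const_add e
  have hle : ∀ᶠ m : ℕ in atTop, e + (f n - n * e) / m ≤ f m / m := by
    filter_upwards [eventually_ge_atTop (max n 1)] with m hm
    have hm0 : (0 : ℝ) < m := by exact_mod_cast (le_max_right n 1).trans hm
    rw [add_div' _ _ _ hm0.ne', div_le_div_iff_of_pos_right hm0]
    linarith [add_mul_fwdDiff_le hf ((le_max_left n 1).trans hm)]
  linarith [le_of_tendsto_of_tendsto hlower h hle]

lemma sum_Icc_div_le_add_mul_harmonic (hf : Antitone f) {N M : ℕ} (hNM : N ≤ M) :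
    ∑ k ∈ Icc 1 M, f k / k ≤ ∑ k ∈ Icc 1 N, (f k - f N) / k + f N * harmonic M := by
  have hsplit : ∑ k ∈ Icc 1 M, f k / k
      = ∑ k ∈ Icc 1 M, (f k - f N) / k + f N * harmonic M := by
    rw [harmonic_eq_sum_Icc, mul_comm]
    push_cast
    rw [sum_mul, ← sum_add_distrib]
    exact sum_congr rfl fun k _ => by ring
  rw [hsplit, add_le_add_iff_right, ← neg_le_neg_iff, ← sum_neg_distrib, ← sum_neg_distrib]
  refine sum_le_sum_of_subset_of_nonneg (Icc_subset_Icc_right hNM) fun k hkM hkN => ?_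
  have hNk : N ≤ k := by simp only [mem_Icc] at hkM hkN; omega
  rw [neg_nonneg]
  exact div_nonpos_of_nonpos_of_nonneg (sub_nonpos.2 (hf hNk)) k.cast_nonneg

lemma nonneg_of_antitone_of_tendsto_sum_Icc_div (hf : Antitone f) {L : ℝ}
    (h : Tendsto (fun N => ∑ k ∈ Icc 1 N, f k / k) atTop (𝓝 L)) (n : ℕ) : 0 ≤ f n := by
  by_contra! hneg
  have hbound : Tendsto (fun M => ∑ k ∈ Icc 1 n, (f k - f n) / k + f n * harmonic M)
      atTop atBot :=
    tendsto_atBot_add_const_left _ _ <|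
      (tendsto_const_mul_atBot_of_neg hneg).2 tendsto_harmonic_atTop
  refine not_tendsto_atBot_of_tendsto_nhds h (tendsto_atBot_mono' _ ?_ hbound)
  filter_upwards [eventually_ge_atTop n] with M hM
  exact sum_Icc_div_le_add_mul_harmonic hf hM

lemma summable_abs_sub_succ_of_antitone (hf : Antitone f) {b : ℝ} (hb : ∀ n, b ≤ f n) :
    Summable fun n => |f n - f (n + 1)| := by
  have habs (n : ℕ) : |f n - f (n + 1)| = f n - f (n + 1) :=
    abs_of_nonneg (sub_nonneg.2 (hf n.le_succ))
  refine summable_of_sum_range_le (c := f 0 - b) (fun n => abs_nonneg _) fun n => ?_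
  simp only [habs, sum_range_sub']
  linarith [hb n]

end Sequence

/-- If `{λ_n}` is a convex real sequence with `Σ λ_n/n` convergent, then
`{λ_n} ∈ BV` and `λ_{n+1} = O(λ_n)`. -/
theorem convex_seq_BV_and_ratio_bounded
    (lam : ℕ → ℝ)
    (hconv : ∀ n : ℕ, lam n - 2 * lam (n + 1) + lam (n + 2) ≥ 0)
    (hsum : ∃ L : ℝ, Filter.Tendsto
      (fun N : ℕ => ∑ n ∈ Finset.Icc 1 N, lam n / n) Filter.atTop (nhds L)) :
    (Summable fun n => |lam n - lam (n + 1)|) ∧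
    (∃ C : ℝ, ∀ n : ℕ, 1 ≤ n → |lam (n + 1)| ≤ C * |lam n|) := by
  obtain ⟨L, hL⟩ := hsum
  have hdiff : Monotone (Δ_[1] lam) :=
    monotone_nat_of_le_succ fun n => by simp only [fwdDiff]; linarith [hconv n]
  have hanti : Antitone lam :=
    antitone_of_monotone_fwdDiff_of_tendsto_div hdiff (tendsto_nhds_zero_of_tendsto_sum_Icc hL)
  have hnonneg := nonneg_of_antitone_of_tendsto_sum_Icc_div hanti hL
  refine ⟨summable_abs_sub_succ_of_antitone hanti hnonneg, 1, fun n _ => ?_⟩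
  rw [one_mul, abs_of_nonneg (hnonneg _), abs_of_nonneg (hnonneg _)]
  exact hanti n.le_succ
end
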